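/- arXiv:1607.01744 — 4 statements merged into one kernel-verified Lean document; each statement's English description precedes it below -/
import Mathlib

section
/- Let H₁, H₋₁: [0,∞) → [0,∞) be nonnegative, nondecreasing, and globally Lipschitz with constant κ on [0,∞). For any continuous function x: [0,T] → ℝ, there exists a unique pair of continuous functions w₁, w₋₁: [0,T] → [0,∞) such that for all t ∈ [0,T]: w₁(t) = [x(t) − ∫₀ᵗ H₁(w₁(s)) ds + ∫₀ᵗ H₋₁(w₋₁(s)) ds]⁺ and w₋₁(t) = [x(t) − ∫₀ᵗ H₁(w₁(s)) ds + ∫₀ᵗ H₋₁(w₋₁(s)) ds]⁻. -/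
open Set intervalIntegral

namespace Stmt1Aux

variable {T : ℝ}

/-- projection onto `Icc 0 T` -/
noncomputable def prj (hT : (0:ℝ) ≤ T) (s : ℝ) : Icc (0:ℝ) T := projIcc 0 T hT s

/-- The Picard map `Φ y (t) = x t + ∫₀ᵗ F (y s) ds`. -/
noncomputable def Phi (hT : (0:ℝ) ≤ T) (F x : ℝ → ℝ) (hF : Continuous F)
    (hx : ContinuousOn x (Icc 0 T)) (y : C(Icc (0:ℝ) T, ℝ)) : C(Icc (0:ℝ) T, ℝ) :=
  ⟨fun t => x t + ∫ s in (0:ℝ)..(t:ℝ), F (y (prj hT s)), by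
    have hg : Continuous fun s : ℝ => F (y (prj hT s)) :=
      hF.comp (y.continuous.comp (continuous_projIcc (h := hT)))
    have h1 : Continuous fun b : ℝ => ∫ s in (0:ℝ)..b, F (y (prj hT s)) :=
      intervalIntegral.continuous_primitive (fun a b => hg.intervalIntegrable a b) 0
    exact (hx.restrict).add (h1.comp continuous_subtype_val)⟩

theorem Phi_apply (hT : (0:ℝ) ≤ T) (F x : ℝ → ℝ) (hF : Continuous F)
    (hx : ContinuousOn x (Icc 0 T)) (y : C(Icc (0:ℝ) T, ℝ)) (t : Icc (0:ℝ) T) :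
    Phi hT F x hF hx y t = x t + ∫ s in (0:ℝ)..(t:ℝ), F (y (prj hT s)) := rfl

theorem key_estimate (hT : (0:ℝ) ≤ T) (F x : ℝ → ℝ) (hF : Continuous F)
    (hx : ContinuousOn x (Icc 0 T)) {L : NNReal} (hFlip : LipschitzWith L F) :
    ∀ (n : ℕ) (y z : C(Icc (0:ℝ) T, ℝ)) (t : Icc (0:ℝ) T),
      |(Phi hT F x hF hx)^[n] y t - (Phi hT F x hF hx)^[n] z t| ≤
        ((L : ℝ) * t) ^ n / n.factorial * dist y z := by
  set Φ := Phi hT F x hF hx with hΦ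
  intro n
  induction n with
  | zero =>
    intro y z t
    simpa [Real.dist_eq] using ContinuousMap.dist_apply_le_dist (f := y) (g := z) t
  | succ n ih =>
    intro y z t
    set Y := Φ^[n] y with hY
    set Z := Φ^[n] z with hZ
    have ht0 : (0:ℝ) ≤ (t:ℝ) := t.2.1
    have hd0 : (0:ℝ) ≤ dist y z := dist_nonneg
    have hgY : Continuous fun s : ℝ => F (Y (prj hT s)) :=
      hF.comp (Y.continuous.comp (continuous_projIcc (h := hT)))
    have hgZ : Continuous fun s : ℝ => F (Z (prj hT s)) :=
      hF.comp (Z.continuous.comp (continuous_projIcc (h := hT)))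
    have hsub :
        Φ^[n+1] y t - Φ^[n+1] z t =
          ∫ s in (0:ℝ)..(t:ℝ), (F (Y (prj hT s)) - F (Z (prj hT s))) := by
      rw [Function.iterate_succ_apply', Function.iterate_succ_apply', ← hY, ← hZ,
        Phi_apply, Phi_apply,
        intervalIntegral.integral_sub (hgY.intervalIntegrable 0 t) (hgZ.intervalIntegrable 0 t)]
      ring
    rw [hsub]
    have h1 : |∫ s in (0:ℝ)..(t:ℝ), (F (Y (prj hT s)) - F (Z (prj hT s)))| ≤
        ∫ s in (0:ℝ)..(t:ℝ), |F (Y (prj hT s)) - F (Z (prj hT s))| :=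
      abs_integral_le_integral_abs ht0
    have h2 : ∫ s in (0:ℝ)..(t:ℝ), |F (Y (prj hT s)) - F (Z (prj hT s))| ≤
        ∫ s in (0:ℝ)..(t:ℝ), ((L:ℝ) ^ (n+1) * dist y z / n.factorial) * s ^ n := by
      apply intervalIntegral.integral_mono_on ht0
      · exact ((hgY.sub hgZ).abs).intervalIntegrable 0 t
      · exact (continuous_const.mul (continuous_pow n)).intervalIntegrable 0 t
      · intro s hs
        have hsI : s ∈ Icc (0:ℝ) T := ⟨hs.1, hs.2.trans t.2.2⟩
        have hlip : |F (Y (prj hT s)) - F (Z (prj hT s))| ≤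
            (L:ℝ) * |Y (prj hT s) - Z (prj hT s)| := by
          have := hFlip.dist_le_mul (Y (prj hT s)) (Z (prj hT s))
          simpa [Real.dist_eq] using this
        have hih := ih y z (prj hT s)
        have hprj : ((prj hT s : ℝ)) = s := by
          simp [prj, projIcc_of_mem hT hsI]
        rw [hprj] at hih
        calc |F (Y (prj hT s)) - F (Z (prj hT s))|
            ≤ (L:ℝ) * |Y (prj hT s) - Z (prj hT s)| := hlip
          _ ≤ (L:ℝ) * (((L:ℝ) * s) ^ n / n.factorial * dist y z) := by
              exact mul_le_mul_of_nonneg_left hih L.coe_nonneg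
          _ = (L:ℝ) ^ (n+1) * dist y z / n.factorial * s ^ n := by
              rw [mul_pow]; ring
    have h3 : ∫ s in (0:ℝ)..(t:ℝ), ((L:ℝ) ^ (n+1) * dist y z / n.factorial) * s ^ n =
        ((L:ℝ) * t) ^ (n+1) / (n+1).factorial * dist y z := by
      rw [intervalIntegral.integral_const_mul, integral_pow]
      have hfac : ((n+1).factorial : ℝ) = (n+1) * n.factorial := by
        rw [Nat.factorial_succ]; push_cast; ring
      have hnf : (n.factorial : ℝ) ≠ 0 := Nat.cast_ne_zero.mpr n.factorial_ne_zero
      have hn1 : ((n:ℝ) + 1) ≠ 0 := by positivity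
      rw [hfac, mul_pow]
      field_simp
      ring
    calc |∫ s in (0:ℝ)..(t:ℝ), (F (Y (prj hT s)) - F (Z (prj hT s)))|
        ≤ ∫ s in (0:ℝ)..(t:ℝ), |F (Y (prj hT s)) - F (Z (prj hT s))| := h1
      _ ≤ ∫ s in (0:ℝ)..(t:ℝ), ((L:ℝ) ^ (n+1) * dist y z / n.factorial) * s ^ n := h2
      _ = ((L:ℝ) * t) ^ (n+1) / (n+1).factorial * dist y z := h3

theorem exists_fixedPoint (hT : (0:ℝ) < T) (F x : ℝ → ℝ) (hF : Continuous F)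
    (hx : ContinuousOn x (Icc 0 T)) {L : NNReal} (hFlip : LipschitzWith L F) :
    ∃ p : C(Icc (0:ℝ) T, ℝ), Phi hT.le F x hF hx p = p ∧
      ∀ q : C(Icc (0:ℝ) T, ℝ), Phi hT.le F x hF hx q = q → q = p := by
  set Φ := Phi hT.le F x hF hx with hΦ
  -- find n with (L*T)^n / n! < 1
  obtain ⟨n, hn⟩ : ∃ n : ℕ, ((L:ℝ) * T) ^ n / n.factorial < 1 := by
    have := (FloorSemiring.tendsto_pow_div_factorial_atTop ((L:ℝ) * T)).eventually_lt_const
      (by norm_num : (0:ℝ) < 1)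
    exact this.exists
  have hKnonneg : (0:ℝ) ≤ ((L:ℝ) * T) ^ n / n.factorial := by positivity
  set K : NNReal := ⟨((L:ℝ) * T) ^ n / n.factorial, hKnonneg⟩ with hK
  have hdist : ∀ y z : C(Icc (0:ℝ) T, ℝ), dist (Φ^[n] y) (Φ^[n] z) ≤ (K:ℝ) * dist y z := by
    intro y z
    rw [ContinuousMap.dist_le (by positivity)]
    intro t
    have h := key_estimate hT.le F x hF hx hFlip n y z t
    rw [Real.dist_eq]
    refine h.trans ?_
    have hK' : (K:ℝ) = ((L:ℝ) * T) ^ n / n.factorial := rfl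
    rw [hK']
    gcongr
    · exact mul_nonneg L.coe_nonneg t.2.1
    · exact t.2.2
  have hC : ContractingWith K (Φ^[n]) := by
    constructor
    · exact_mod_cast hn
    · exact LipschitzWith.of_dist_le_mul hdist
  haveI : Nonempty C(Icc (0:ℝ) T, ℝ) := ⟨ContinuousMap.const _ 0⟩
  set p := hC.fixedPoint (Φ^[n]) with hp
  have hfix : Function.IsFixedPt (Φ^[n]) p := hC.fixedPoint_isFixedPt
  have hΦp : Φ p = p := by
    have h1 : Function.IsFixedPt (Φ^[n]) (Φ p) := by
      show Φ^[n] (Φ p) = Φ p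
      rw [← Function.iterate_succ_apply, Function.iterate_succ_apply', hfix]
    have := hC.fixedPoint_unique h1
    have h2 := hC.fixedPoint_unique hfix
    rw [this, ← h2]
  refine ⟨p, hΦp, ?_⟩
  intro q hq
  have hqfix : Function.IsFixedPt (Φ^[n]) q := (Function.IsFixedPt.iterate hq n)
  have h2 := hC.fixedPoint_unique hfix
  rw [hC.fixedPoint_unique hqfix, ← h2]

end Stmt1Aux

open Stmt1Aux

/-- Existence and uniqueness for the fixed point system
`w₁ = [x − ∫ H₁(w₁) + ∫ H₋₁(w₋₁)]⁺`, `w₋₁ = [·]⁻` on `[0,T]`, for continuous input `x`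
and nonnegative, nondecreasing, globally `κ`-Lipschitz `H₁, H₋₁`. -/
theorem stmt_1 (T : ℝ) (hT : 0 < T) (κ : NNReal) (H₁ Hm1 : ℝ → ℝ)
    (hH₁0 : ∀ u ≥ (0:ℝ), 0 ≤ H₁ u) (hHm10 : ∀ u ≥ (0:ℝ), 0 ≤ Hm1 u)
    (hH₁mono : MonotoneOn H₁ (Ici 0)) (hHm1mono : MonotoneOn Hm1 (Ici 0))
    (hH₁lip : LipschitzWith κ H₁) (hHm1lip : LipschitzWith κ Hm1)
    (x : ℝ → ℝ) (hx : ContinuousOn x (Icc 0 T)) :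
    ∃ w₁ wm1 : ℝ → ℝ,
      (ContinuousOn w₁ (Icc 0 T) ∧ ContinuousOn wm1 (Icc 0 T) ∧
        (∀ t ∈ Icc 0 T, 0 ≤ w₁ t) ∧ (∀ t ∈ Icc 0 T, 0 ≤ wm1 t) ∧
        (∀ t ∈ Icc 0 T,
          w₁ t = max (x t - (∫ s in (0:ℝ)..t, H₁ (w₁ s)) + ∫ s in (0:ℝ)..t, Hm1 (wm1 s)) 0) ∧
        (∀ t ∈ Icc 0 T,
          wm1 t = max (-(x t - (∫ s in (0:ℝ)..t, H₁ (w₁ s)) + ∫ s in (0:ℝ)..t, Hm1 (wm1 s))) 0)) ∧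
      (∀ v₁ vm1 : ℝ → ℝ,
        (ContinuousOn v₁ (Icc 0 T) ∧ ContinuousOn vm1 (Icc 0 T) ∧
          (∀ t ∈ Icc 0 T, 0 ≤ v₁ t) ∧ (∀ t ∈ Icc 0 T, 0 ≤ vm1 t) ∧
          (∀ t ∈ Icc 0 T,
            v₁ t = max (x t - (∫ s in (0:ℝ)..t, H₁ (v₁ s)) + ∫ s in (0:ℝ)..t, Hm1 (vm1 s)) 0) ∧
          (∀ t ∈ Icc 0 T,
            vm1 t = max (-(x t - (∫ s in (0:ℝ)..t, H₁ (v₁ s)) + ∫ s in (0:ℝ)..t, Hm1 (vm1 s))) 0)) →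
        ∀ t ∈ Icc 0 T, v₁ t = w₁ t ∧ vm1 t = wm1 t) := by
  have hT' : (0:ℝ) ≤ T := hT.le
  set F : ℝ → ℝ := fun u => Hm1 (max (-u) 0) - H₁ (max u 0) with hFdef
  have hlip1 : LipschitzWith (κ * 1) (fun u : ℝ => H₁ (max u 0)) :=
    hH₁lip.comp (LipschitzWith.id.max_const 0)
  have hlip2 : LipschitzWith (κ * 1) (fun u : ℝ => Hm1 (max (-u) 0)) :=
    hHm1lip.comp (LipschitzWith.id.neg.max_const 0)
  have hFlip : LipschitzWith (κ * 1 + κ * 1) F := hlip2.sub hlip1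
  have hF : Continuous F := hFlip.continuous
  obtain ⟨p, hp, huniq⟩ := exists_fixedPoint hT F x hF hx hFlip
  set w₁ : ℝ → ℝ := fun t => max (p (prj hT' t)) 0 with hw₁def
  set wm1 : ℝ → ℝ := fun t => max (-(p (prj hT' t))) 0 with hwm1def
  have hpc : Continuous fun s : ℝ => p (prj hT' s) :=
    p.continuous.comp (continuous_projIcc (h := hT'))
  have hw₁c : Continuous w₁ := hpc.max continuous_const
  have hwm1c : Continuous wm1 := hpc.neg.max continuous_const
  have hcw1 : Continuous fun s : ℝ => H₁ (w₁ s) := hH₁lip.continuous.comp hw₁c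
  have hcwm : Continuous fun s : ℝ => Hm1 (wm1 s) := hHm1lip.continuous.comp hwm1c
  -- key identity for the fixed point
  have hE : ∀ t (ht : t ∈ Icc 0 T),
      x t - (∫ s in (0:ℝ)..t, H₁ (w₁ s)) + (∫ s in (0:ℝ)..t, Hm1 (wm1 s)) = p ⟨t, ht⟩ := by
    intro t ht
    have hpt := DFunLike.congr_fun hp ⟨t, ht⟩
    rw [Phi_apply] at hpt
    have hint : ∫ s in (0:ℝ)..t, F (p (prj hT' s)) =
        (∫ s in (0:ℝ)..t, Hm1 (wm1 s)) - ∫ s in (0:ℝ)..t, H₁ (w₁ s) := by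
      have hfun : (fun s : ℝ => F (p (prj hT' s))) =
          fun s : ℝ => Hm1 (wm1 s) - H₁ (w₁ s) := rfl
      rw [hfun, intervalIntegral.integral_sub (hcwm.intervalIntegrable 0 t)
        (hcw1.intervalIntegrable 0 t)]
    rw [← hpt, hint]
    ring
  have hprjmem : ∀ t (ht : t ∈ Icc 0 T), prj hT' t = ⟨t, ht⟩ := by
    intro t ht; exact projIcc_of_mem hT' ht
  refine ⟨w₁, wm1, ⟨hw₁c.continuousOn, hwm1c.continuousOn,
    fun t _ => le_max_right _ _, fun t _ => le_max_right _ _, ?_, ?_⟩, ?_⟩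
  · intro t ht
    show max (p (prj hT' t)) 0 = _
    rw [hprjmem t ht, hE t ht]
  · intro t ht
    show max (-(p (prj hT' t))) 0 = _
    rw [hprjmem t ht, hE t ht]
  -- uniqueness
  rintro v₁ vm1 ⟨hv1c, hvm1c, hv10, hvm10, hveq1, hveqm⟩ t ht
  set v₁' : ℝ → ℝ := fun s => v₁ ((prj hT' s : ℝ)) with hv₁'def
  set vm1' : ℝ → ℝ := fun s => vm1 ((prj hT' s : ℝ)) with hvm1'def
  have hprjc : Continuous fun s : ℝ => ((prj hT' s : ℝ)) :=
    continuous_subtype_val.comp (continuous_projIcc (h := hT'))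
  have hv₁'c : Continuous v₁' :=
    hv1c.comp_continuous hprjc fun s => (prj hT' s).2
  have hvm1'c : Continuous vm1' :=
    hvm1c.comp_continuous hprjc fun s => (prj hT' s).2
  have hv₁'eq : ∀ s ∈ Icc 0 T, v₁' s = v₁ s := by
    intro s hs; simp only [hv₁'def, hprjmem s hs]
  have hvm1'eq : ∀ s ∈ Icc 0 T, vm1' s = vm1 s := by
    intro s hs; simp only [hvm1'def, hprjmem s hs]
  have hcv1 : Continuous fun s : ℝ => H₁ (v₁' s) := hH₁lip.continuous.comp hv₁'c
  have hcvm : Continuous fun s : ℝ => Hm1 (vm1' s) := hHm1lip.continuous.comp hvm1'c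
  have hint1 : ∀ u ∈ Icc 0 T,
      (∫ s in (0:ℝ)..u, H₁ (v₁ s)) = ∫ s in (0:ℝ)..u, H₁ (v₁' s) := by
    intro u hu
    apply intervalIntegral.integral_congr
    intro s hs
    rw [uIcc_of_le hu.1] at hs
    exact congrArg H₁ (hv₁'eq s ⟨hs.1, hs.2.trans hu.2⟩).symm
  have hintm : ∀ u ∈ Icc 0 T,
      (∫ s in (0:ℝ)..u, Hm1 (vm1 s)) = ∫ s in (0:ℝ)..u, Hm1 (vm1' s) := by
    intro u hu
    apply intervalIntegral.integral_congr
    intro s hs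
    rw [uIcc_of_le hu.1] at hs
    exact congrArg Hm1 (hvm1'eq s ⟨hs.1, hs.2.trans hu.2⟩).symm
  set q : C(Icc (0:ℝ) T, ℝ) :=
    ⟨fun u => x u - (∫ s in (0:ℝ)..(u:ℝ), H₁ (v₁' s)) + ∫ s in (0:ℝ)..(u:ℝ), Hm1 (vm1' s), by
      have hA : Continuous fun b : ℝ => ∫ s in (0:ℝ)..b, H₁ (v₁' s) :=
        intervalIntegral.continuous_primitive (fun a b => hcv1.intervalIntegrable a b) 0
      have hB : Continuous fun b : ℝ => ∫ s in (0:ℝ)..b, Hm1 (vm1' s) :=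
        intervalIntegral.continuous_primitive (fun a b => hcvm.intervalIntegrable a b) 0
      exact ((hx.restrict).sub (hA.comp continuous_subtype_val)).add
        (hB.comp continuous_subtype_val)⟩ with hqdef
  have hq_eq : ∀ u (hu : u ∈ Icc 0 T), q ⟨u, hu⟩ =
      x u - (∫ s in (0:ℝ)..u, H₁ (v₁ s)) + ∫ s in (0:ℝ)..u, Hm1 (vm1 s) := by
    intro u hu
    show x u - (∫ s in (0:ℝ)..u, H₁ (v₁' s)) + ∫ s in (0:ℝ)..u, Hm1 (vm1' s) = _
    rw [← hint1 u hu, ← hintm u hu]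
  have hv1q : ∀ u (hu : u ∈ Icc 0 T), v₁ u = max (q ⟨u, hu⟩) 0 := by
    intro u hu; rw [hq_eq u hu]; exact hveq1 u hu
  have hvm1q : ∀ u (hu : u ∈ Icc 0 T), vm1 u = max (-(q ⟨u, hu⟩)) 0 := by
    intro u hu; rw [hq_eq u hu]; exact hveqm u hu
  have hΦq : Phi hT.le F x hF hx q = q := by
    ext u
    rw [Phi_apply]
    have h1 : ∫ s in (0:ℝ)..(u:ℝ), F (q (prj hT' s)) =
        (∫ s in (0:ℝ)..(u:ℝ), Hm1 (vm1' s)) - ∫ s in (0:ℝ)..(u:ℝ), H₁ (v₁' s) := by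
      have h2 : ∫ s in (0:ℝ)..(u:ℝ), F (q (prj hT' s)) =
          ∫ s in (0:ℝ)..(u:ℝ), (Hm1 (vm1' s) - H₁ (v₁' s)) := by
        apply intervalIntegral.integral_congr
        intro s hs
        rw [uIcc_of_le u.2.1] at hs
        have hsI : s ∈ Icc (0:ℝ) T := ⟨hs.1, hs.2.trans u.2.2⟩
        show F (q (prj hT' s)) = Hm1 (vm1' s) - H₁ (v₁' s)
        rw [hprjmem s hsI]
        show Hm1 (max (-(q ⟨s, hsI⟩)) 0) - H₁ (max (q ⟨s, hsI⟩) 0) = _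
        rw [← hv1q s hsI, ← hvm1q s hsI, hv₁'eq s hsI, hvm1'eq s hsI]
      rw [h2, intervalIntegral.integral_sub (hcvm.intervalIntegrable 0 u)
        (hcv1.intervalIntegrable 0 u)]
    rw [h1]
    show _ = x (u:ℝ) - (∫ s in (0:ℝ)..(u:ℝ), H₁ (v₁' s)) + ∫ s in (0:ℝ)..(u:ℝ), Hm1 (vm1' s)
    ring
  have hqp : q = p := huniq q hΦq
  constructor
  · rw [hv1q t ht, hqp]
    show max (p ⟨t, ht⟩) 0 = max (p (prj hT' t)) 0
    rw [hprjmem t ht]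
  · rw [hvm1q t ht, hqp]
    show max (-(p ⟨t, ht⟩)) 0 = max (-(p (prj hT' t))) 0
    rw [hprjmem t ht]
end

section
/- Let H₁, H₋₁: [0,∞) → [0,∞) be nonnegative, nondecreasing, globally Lipschitz with constant κ. Suppose (w₁, w₋₁) and (w̃₁, w̃₋₁) are two pairs of continuous nonnegative functions on [0,T] solving the fixed point system wᵢ(t) = [x(t) − ∫₀ᵗ H₁(w₁(s)) ds + ∫₀ᵗ H₋₁(w₋₁(s)) ds]^{sign(i)} with inputs x and x̃ respectively. Then sup_{t∈[0,T]} (|w₁(t)−w̃₁(t)| + |w₋₁(t)−w̃₋₁(t)|) ≤ 2·e^{4κT}·sup_{t∈[0,T]} |x(t)−x̃(t)|. -/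
open Set intervalIntegral

/-- Lipschitz continuity of the solution map of the fixed point system with respect to the
supremum norm: two solutions with inputs `x` and `x̃` satisfy
`sup (|w₁−w̃₁| + |w₋₁−w̃₋₁|) ≤ 2 e^{4κT} sup |x − x̃|`. -/
theorem stmt_2 (T : ℝ) (hT : 0 < T) (κ : NNReal) (H₁ Hm1 : ℝ → ℝ)
    (hH₁0 : ∀ u ≥ (0:ℝ), 0 ≤ H₁ u) (hHm10 : ∀ u ≥ (0:ℝ), 0 ≤ Hm1 u)
    (hH₁mono : MonotoneOn H₁ (Ici 0)) (hHm1mono : MonotoneOn Hm1 (Ici 0))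
    (hH₁lip : LipschitzWith κ H₁) (hHm1lip : LipschitzWith κ Hm1)
    (x xt w₁ wm1 v₁ vm1 : ℝ → ℝ)
    (hxc : ContinuousOn x (Icc 0 T)) (hxtc : ContinuousOn xt (Icc 0 T))
    (hw₁c : ContinuousOn w₁ (Icc 0 T)) (hwm1c : ContinuousOn wm1 (Icc 0 T))
    (hv₁c : ContinuousOn v₁ (Icc 0 T)) (hvm1c : ContinuousOn vm1 (Icc 0 T))
    (hw₁0 : ∀ t ∈ Icc 0 T, 0 ≤ w₁ t) (hwm10 : ∀ t ∈ Icc 0 T, 0 ≤ wm1 t)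
    (hv₁0 : ∀ t ∈ Icc 0 T, 0 ≤ v₁ t) (hvm10 : ∀ t ∈ Icc 0 T, 0 ≤ vm1 t)
    (hw₁ : ∀ t ∈ Icc 0 T,
      w₁ t = max (x t - (∫ s in (0:ℝ)..t, H₁ (w₁ s)) + ∫ s in (0:ℝ)..t, Hm1 (wm1 s)) 0)
    (hwm1 : ∀ t ∈ Icc 0 T,
      wm1 t = max (-(x t - (∫ s in (0:ℝ)..t, H₁ (w₁ s)) + ∫ s in (0:ℝ)..t, Hm1 (wm1 s))) 0)
    (hv₁ : ∀ t ∈ Icc 0 T,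
      v₁ t = max (xt t - (∫ s in (0:ℝ)..t, H₁ (v₁ s)) + ∫ s in (0:ℝ)..t, Hm1 (vm1 s)) 0)
    (hvm1 : ∀ t ∈ Icc 0 T,
      vm1 t = max (-(xt t - (∫ s in (0:ℝ)..t, H₁ (v₁ s)) + ∫ s in (0:ℝ)..t, Hm1 (vm1 s))) 0) :
    (⨆ t : Icc (0:ℝ) T, (|w₁ t - v₁ t| + |wm1 t - vm1 t|)) ≤
      2 * Real.exp (4 * κ * T) * ⨆ t : Icc (0:ℝ) T, |x t - xt t| := by
  classical
  have hmemT : (0:ℝ) ∈ Icc (0:ℝ) T := ⟨le_refl 0, hT.le⟩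
  haveI : Nonempty (Icc (0:ℝ) T) := ⟨⟨0, hmemT⟩⟩
  haveI : CompactSpace (Icc (0:ℝ) T) := isCompact_iff_compactSpace.mp isCompact_Icc
  set M : ℝ := ⨆ t : Icc (0:ℝ) T, |x t - xt t| with hMdef
  have hbddM : BddAbove (Set.range fun t : Icc (0:ℝ) T => |x t - xt t|) := by
    have hc : Continuous fun t : Icc (0:ℝ) T => |x t - xt t| :=
      ((hxc.sub hxtc).abs).restrict
    exact (isCompact_range hc).bddAbove
  have hMle : ∀ t ∈ Icc (0:ℝ) T, |x t - xt t| ≤ M := fun t ht =>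
    le_ciSup hbddM (⟨t, ht⟩ : Icc (0:ℝ) T)
  have hMnn : 0 ≤ M := le_trans (abs_nonneg _) (hMle 0 hmemT)
  set φ : ℝ → ℝ := fun t => |w₁ t - v₁ t| + |wm1 t - vm1 t| with hφdef
  have φcont : ContinuousOn φ (Icc 0 T) :=
    ((hw₁c.sub hv₁c).abs).add ((hwm1c.sub hvm1c).abs)
  have φnn : ∀ t, 0 ≤ φ t := fun t => add_nonneg (abs_nonneg _) (abs_nonneg _)
  have hsub : ∀ t ∈ Icc (0:ℝ) T, Icc (0:ℝ) t ⊆ Icc (0:ℝ) T := fun t ht =>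
    Icc_subset_Icc le_rfl ht.2
  have φint : ∀ t ∈ Icc (0:ℝ) T, IntervalIntegrable φ MeasureTheory.volume 0 t := fun t ht =>
    (φcont.mono (hsub t ht)).intervalIntegrable_of_Icc ht.1
  have intc : ∀ (H f : ℝ → ℝ), LipschitzWith κ H → ContinuousOn f (Icc 0 T) →
      ∀ t ∈ Icc (0:ℝ) T, IntervalIntegrable (fun s => H (f s)) MeasureTheory.volume 0 t := by
    intro H f hH hf t ht
    exact ((hH.continuous.comp_continuousOn (hf.mono (hsub t ht))).intervalIntegrable_of_Icc ht.1)
  have intd1 : ∀ t ∈ Icc (0:ℝ) T,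
      IntervalIntegrable (fun s => |H₁ (w₁ s) - H₁ (v₁ s)|) MeasureTheory.volume 0 t := fun t ht =>
    ((intc H₁ w₁ hH₁lip hw₁c t ht).sub (intc H₁ v₁ hH₁lip hv₁c t ht)).abs
  have intd2 : ∀ t ∈ Icc (0:ℝ) T,
      IntervalIntegrable (fun s => |Hm1 (wm1 s) - Hm1 (vm1 s)|) MeasureTheory.volume 0 t :=
    fun t ht =>
    ((intc Hm1 wm1 hHm1lip hwm1c t ht).sub (intc Hm1 vm1 hHm1lip hvm1c t ht)).abs
  have inta1 : ∀ t ∈ Icc (0:ℝ) T,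
      IntervalIntegrable (fun s => (κ:ℝ) * |w₁ s - v₁ s|) MeasureTheory.volume 0 t := fun t ht =>
    ((((hw₁c.sub hv₁c).abs).mono (hsub t ht)).const_smul (κ:ℝ)).intervalIntegrable_of_Icc ht.1
  have inta2 : ∀ t ∈ Icc (0:ℝ) T,
      IntervalIntegrable (fun s => (κ:ℝ) * |wm1 s - vm1 s|) MeasureTheory.volume 0 t := fun t ht =>
    ((((hwm1c.sub hvm1c).abs).mono (hsub t ht)).const_smul (κ:ℝ)).intervalIntegrable_of_Icc ht.1
  set g : ℝ → ℝ := fun t => ∫ s in (0:ℝ)..t, φ s with hgdef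
  have key : ∀ t ∈ Icc (0:ℝ) T, φ t ≤ 2 * M + 2 * (κ:ℝ) * g t := by
    intro t ht
    set A : ℝ := x t - (∫ s in (0:ℝ)..t, H₁ (w₁ s)) + ∫ s in (0:ℝ)..t, Hm1 (wm1 s) with hA
    set B : ℝ := xt t - (∫ s in (0:ℝ)..t, H₁ (v₁ s)) + ∫ s in (0:ℝ)..t, Hm1 (vm1 s) with hB
    have h1 : |w₁ t - v₁ t| ≤ |A - B| := by
      rw [hw₁ t ht, hv₁ t ht]; exact abs_max_sub_max_le_abs _ _ _
    have h2 : |wm1 t - vm1 t| ≤ |A - B| := by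
      rw [hwm1 t ht, hvm1 t ht]
      calc |max (-A) 0 - max (-B) 0| ≤ |(-A) - (-B)| := abs_max_sub_max_le_abs _ _ _
        _ = |A - B| := by rw [neg_sub_neg, abs_sub_comm]
    have hd1 : (∫ s in (0:ℝ)..t, |H₁ (w₁ s) - H₁ (v₁ s)|) ≤
        ∫ s in (0:ℝ)..t, (κ:ℝ) * |w₁ s - v₁ s| := by
      apply intervalIntegral.integral_mono_on ht.1 (intd1 t ht) (inta1 t ht)
      intro s _
      have := hH₁lip.dist_le_mul (w₁ s) (v₁ s)
      simpa [Real.dist_eq] using this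
    have hd2 : (∫ s in (0:ℝ)..t, |Hm1 (wm1 s) - Hm1 (vm1 s)|) ≤
        ∫ s in (0:ℝ)..t, (κ:ℝ) * |wm1 s - vm1 s| := by
      apply intervalIntegral.integral_mono_on ht.1 (intd2 t ht) (inta2 t ht)
      intro s _
      have := hHm1lip.dist_le_mul (wm1 s) (vm1 s)
      simpa [Real.dist_eq] using this
    have hsum : (∫ s in (0:ℝ)..t, (κ:ℝ) * |w₁ s - v₁ s|) +
        (∫ s in (0:ℝ)..t, (κ:ℝ) * |wm1 s - vm1 s|) = (κ:ℝ) * g t := by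
      rw [← intervalIntegral.integral_add (inta1 t ht) (inta2 t ht), hgdef, ←
        intervalIntegral.integral_const_mul]
      congr 1
      funext s
      rw [hφdef]
      ring
    have hABeq : A - B = (x t - xt t)
        - (∫ s in (0:ℝ)..t, (H₁ (w₁ s) - H₁ (v₁ s)))
        + ∫ s in (0:ℝ)..t, (Hm1 (wm1 s) - Hm1 (vm1 s)) := by
      rw [intervalIntegral.integral_sub (intc H₁ w₁ hH₁lip hw₁c t ht)
          (intc H₁ v₁ hH₁lip hv₁c t ht),
        intervalIntegral.integral_sub (intc Hm1 wm1 hHm1lip hwm1c t ht)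
          (intc Hm1 vm1 hHm1lip hvm1c t ht), hA, hB]
      ring
    have habs1 : |∫ s in (0:ℝ)..t, (H₁ (w₁ s) - H₁ (v₁ s))| ≤
        ∫ s in (0:ℝ)..t, |H₁ (w₁ s) - H₁ (v₁ s)| :=
      intervalIntegral.abs_integral_le_integral_abs ht.1
    have habs2 : |∫ s in (0:ℝ)..t, (Hm1 (wm1 s) - Hm1 (vm1 s))| ≤
        ∫ s in (0:ℝ)..t, |Hm1 (wm1 s) - Hm1 (vm1 s)| :=
      intervalIntegral.abs_integral_le_integral_abs ht.1
    have hABle : |A - B| ≤ M + (κ:ℝ) * g t := by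
      rw [hABeq]
      have htri : |(x t - xt t)
          - (∫ s in (0:ℝ)..t, (H₁ (w₁ s) - H₁ (v₁ s)))
          + ∫ s in (0:ℝ)..t, (Hm1 (wm1 s) - Hm1 (vm1 s))| ≤
          |x t - xt t| + |∫ s in (0:ℝ)..t, (H₁ (w₁ s) - H₁ (v₁ s))|
          + |∫ s in (0:ℝ)..t, (Hm1 (wm1 s) - Hm1 (vm1 s))| := by
        calc |(x t - xt t)
            - (∫ s in (0:ℝ)..t, (H₁ (w₁ s) - H₁ (v₁ s)))
            + ∫ s in (0:ℝ)..t, (Hm1 (wm1 s) - Hm1 (vm1 s))| ≤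
            |(x t - xt t) - (∫ s in (0:ℝ)..t, (H₁ (w₁ s) - H₁ (v₁ s)))|
            + |∫ s in (0:ℝ)..t, (Hm1 (wm1 s) - Hm1 (vm1 s))| := abs_add_le _ _
          _ ≤ |x t - xt t| + |∫ s in (0:ℝ)..t, (H₁ (w₁ s) - H₁ (v₁ s))|
            + |∫ s in (0:ℝ)..t, (Hm1 (wm1 s) - Hm1 (vm1 s))| := by
              have := abs_sub (x t - xt t) (∫ s in (0:ℝ)..t, (H₁ (w₁ s) - H₁ (v₁ s)))
              linarith
      have := hMle t ht
      linarith [hsum, hd1, hd2, habs1, habs2]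
    have hφle : φ t ≤ 2 * |A - B| := by rw [hφdef]; dsimp only; linarith
    linarith
  have gnn : ∀ t ∈ Icc (0:ℝ) T, 0 ≤ g t := fun t ht =>
    intervalIntegral.integral_nonneg ht.1 (fun s _ => φnn s)
  have gcont : ContinuousOn g (Icc 0 T) := by
    have hio : MeasureTheory.IntegrableOn φ (uIcc (0:ℝ) T) MeasureTheory.volume := by
      rw [uIcc_of_le hT.le]
      exact φcont.integrableOn_compact isCompact_Icc
    have h := intervalIntegral.continuousOn_primitive_interval hio
    rwa [uIcc_of_le hT.le] at h
  have gderiv : ∀ t ∈ Ico (0:ℝ) T, HasDerivWithinAt g (φ t) (Ici t) t := by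
    intro t ht
    have htI : t ∈ Icc (0:ℝ) T := ⟨ht.1, ht.2.le⟩
    have hmem : Icc (0:ℝ) T ∈ nhdsWithin t (Ici t) := by
      refine Filter.mem_of_superset (inter_mem_nhdsWithin (Ici t) (Iio_mem_nhds ht.2)) ?_
      rintro s ⟨hs1, hs2⟩
      exact ⟨ht.1.trans hs1, hs2.le⟩
    have hmem' : Icc (0:ℝ) T ∈ nhdsWithin t (Ioi t) :=
      nhdsWithin_mono t Ioi_subset_Ici_self hmem
    have hmeas : StronglyMeasurableAtFilter φ (nhdsWithin t (Ioi t)) MeasureTheory.volume :=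
      ⟨Icc (0:ℝ) T, hmem', φcont.aestronglyMeasurable measurableSet_Icc⟩
    have hcw : ContinuousWithinAt φ (Ioi t) t := (φcont t htI).mono_of_mem_nhdsWithin hmem'
    exact intervalIntegral.integral_hasDerivWithinAt_right (φint t htI) hmeas hcw
  have gron : ∀ t ∈ Icc (0:ℝ) T, ‖g t‖ ≤ gronwallBound 0 (2 * (κ:ℝ)) (2 * M) (t - 0) := by
    apply norm_le_gronwallBound_of_norm_deriv_right_le gcont gderiv
    · simp [hgdef]
    · intro t ht
      have htI : t ∈ Icc (0:ℝ) T := ⟨ht.1, ht.2.le⟩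
      rw [Real.norm_eq_abs, Real.norm_eq_abs, abs_of_nonneg (φnn t), abs_of_nonneg (gnn t htI)]
      linarith [key t htI]
  have hgb : ∀ t ∈ Icc (0:ℝ) T,
      2 * M + 2 * (κ:ℝ) * gronwallBound 0 (2 * (κ:ℝ)) (2 * M) t ≤
        2 * Real.exp (4 * (κ:ℝ) * T) * M := by
    intro t ht
    by_cases hκ : (κ:ℝ) = 0
    · rw [hκ]
      simp only [mul_zero, zero_mul, add_zero, Real.exp_zero, mul_one, one_mul]
      linarith
    · have hκpos : (0:ℝ) < (κ:ℝ) := lt_of_le_of_ne κ.2 (Ne.symm hκ)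
      have hKne : (2 * (κ:ℝ)) ≠ 0 := by positivity
      rw [gronwallBound_of_K_ne_0 hKne]
      have hexple : Real.exp (2 * (κ:ℝ) * t) ≤ Real.exp (4 * (κ:ℝ) * T) := by
        apply Real.exp_le_exp.mpr
        nlinarith [ht.1, ht.2, hκpos.le, hT.le]
      have hexp1 : (1:ℝ) ≤ Real.exp (2 * (κ:ℝ) * t) := by
        apply Real.one_le_exp
        nlinarith [ht.1, hκpos.le]
      have heq : 2 * M + 2 * (κ:ℝ) *
          (0 * Real.exp (2 * (κ:ℝ) * t) +
            2 * M / (2 * (κ:ℝ)) * (Real.exp (2 * (κ:ℝ) * t) - 1)) =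
          2 * M * Real.exp (2 * (κ:ℝ) * t) := by
        field_simp
        ring
      rw [heq]
      nlinarith [hMnn, hexple]
  apply ciSup_le
  rintro ⟨t, ht⟩
  have h1 : φ t ≤ 2 * M + 2 * (κ:ℝ) * g t := key t ht
  have h2 : g t ≤ gronwallBound 0 (2 * (κ:ℝ)) (2 * M) t := by
    have hg := gron t ht
    rwa [sub_zero, Real.norm_eq_abs, abs_of_nonneg (gnn t ht)] at hg
  have h3 := hgb t ht
  have hκnn : (0:ℝ) ≤ (κ:ℝ) := κ.2
  calc |w₁ t - v₁ t| + |wm1 t - vm1 t| = φ t := rfl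
    _ ≤ 2 * M + 2 * (κ:ℝ) * g t := h1
    _ ≤ 2 * M + 2 * (κ:ℝ) * gronwallBound 0 (2 * (κ:ℝ)) (2 * M) t := by nlinarith
    _ ≤ 2 * Real.exp (4 * (κ:ℝ) * T) * M := h3
end

section
/- Let λ, c, σ₁, σ₋₁ > 0, set a = λ³(σ₁²+σ₋₁²)/2, and let b(x) = c − λH₁(x/λ)·1_{x≥0} + λH₋₁(−x/λ)·1_{x<0}, where H₁, H₋₁: [0,∞) → [0,∞) are continuous with H₁(0) = H₋₁(0) = 0. Let π(x) = C₀·exp{−(1/a)·(−cx + λ²∫₀^{x/λ}H₁(u)du)} for x ≥ 0 and π(x) = C₀·exp{−(1/a)·(−cx + λ²∫₀^{−x/λ}H₋₁(u)du)} for x < 0, with C₀ > 0 such that π integrates to 1. Then for every f ∈ C²_c(ℝ), ∫_ℝ (a·f''(x) + b(x)·f'(x))·π(x) dx = 0. -/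
/-!
Because `H₁ 0 = H₋₁ 0 = 0`, the drift `b` is continuous, and the exponent of `π` is exactly
`(1/a) ∫₀ˣ b`. Hence `(a π)' = b π` on all of `ℝ` (the two one-sided formulas agree at `0`), so
`(a f'' + b f') π = (f' · a π)'`, whose integral vanishes because `f'` has compact support.
-/

open Set MeasureTheory intervalIntegral

theorem integral_generator_mul_eq_zero {a : ℝ} {b π : ℝ → ℝ}
    (hπ : ∀ x, HasDerivAt (fun y => a * π y) (b x * π x) x)
    (hbπ : Continuous fun x => b x * π x) {f : ℝ → ℝ} (hf : ContDiff ℝ 2 f)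
    (hfc : HasCompactSupport f) :
    ∫ x, (a * deriv (deriv f) x + b x * deriv f x) * π x = 0 := by
  have hf' : ContDiff ℝ 1 (deriv f) := hf.iterate_deriv' 1 1
  have haπ : Continuous fun y => a * π y :=
    continuous_iff_continuousAt.2 fun x => (hπ x).continuousAt
  have hg : ∀ x, HasDerivAt (fun y => deriv f y * (a * π y))
      (deriv (deriv f) x * (a * π x) + deriv f x * (b x * π x)) x := fun x =>
    ((hf'.differentiable one_ne_zero x).hasDerivAt).mul (hπ x)
  have hfc' : HasCompactSupport (deriv f) := hfc.deriv
  calc ∫ x, (a * deriv (deriv f) x + b x * deriv f x) * π x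
      = ∫ x, deriv (deriv f) x * (a * π x) + deriv f x * (b x * π x) := by
        congr 1; ext x; ring
    _ = 0 := integral_eq_zero_of_hasDerivAt_of_integrable hg
        (((hf'.continuous_deriv le_rfl).mul haπ).add (hf'.continuous.mul hbπ)
          |>.integrable_of_hasCompactSupport
          ((hfc'.deriv.mul_right).add hfc'.mul_right))
        ((hf'.continuous.mul haπ).integrable_of_hasCompactSupport hfc'.mul_right)

theorem hasDerivAt_mul_exp_integral_div {b : ℝ → ℝ} (hb : Continuous b) {a : ℝ} (ha : a ≠ 0)
    (C x : ℝ) :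
    HasDerivAt (fun y => a * (C * Real.exp ((1 / a) * ∫ t in (0 : ℝ)..y, b t)))
      (b x * (C * Real.exp ((1 / a) * ∫ t in (0 : ℝ)..x, b t))) x := by
  have hB := (hb.integral_hasStrictDerivAt 0 x).hasDerivAt
  refine ((((hB.const_mul (1 / a)).exp).const_mul C).const_mul a).congr_deriv ?_
  field_simp

theorem integral_const_sub_mul_comp_div {H : ℝ → ℝ} (hH : Continuous H) (c : ℝ) {lam : ℝ}
    (hlam : lam ≠ 0) (x : ℝ) :
    ∫ t in (0 : ℝ)..x, (c - lam * H (t / lam)) =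
      c * x - lam ^ 2 * ∫ u in (0 : ℝ)..x / lam, H u := by
  rw [integral_sub intervalIntegrable_const
      ((by fun_prop : Continuous fun t => lam * H (t / lam)).intervalIntegrable _ _),
    intervalIntegral.integral_const_mul, intervalIntegral.integral_comp_div H hlam]
  simp only [intervalIntegral.integral_const, sub_zero, smul_eq_mul, zero_div]
  ring

theorem integral_const_add_mul_comp_neg_div {H : ℝ → ℝ} (hH : Continuous H) (c : ℝ) {lam : ℝ}
    (hlam : lam ≠ 0) (x : ℝ) :
    ∫ t in (0 : ℝ)..x, (c + lam * H (-t / lam)) =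
      c * x - lam ^ 2 * ∫ u in (0 : ℝ)..(-x / lam), H u := by
  have hneg : ∀ t, -t / lam = t / -lam := fun t => by rw [neg_div, div_neg]
  simp_rw [hneg]
  rw [integral_add intervalIntegrable_const
      ((by fun_prop : Continuous fun t => lam * H (t / -lam)).intervalIntegrable _ _),
    intervalIntegral.integral_const_mul, intervalIntegral.integral_comp_div H (neg_ne_zero.2 hlam)]
  simp only [intervalIntegral.integral_const, sub_zero, smul_eq_mul, zero_div, neg_mul, mul_neg]
  ring

section Drift

variable {c lam : ℝ} {H₁ Hm1 b : ℝ → ℝ}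

theorem continuous_of_eq_piecewise_drift (hH₁c : Continuous H₁) (hHm1c : Continuous Hm1)
    (hH₁zero : H₁ 0 = 0) (hHm1zero : Hm1 0 = 0)
    (hb : ∀ x, b x = if 0 ≤ x then c - lam * H₁ (x / lam) else c + lam * Hm1 (-x / lam)) :
    Continuous b := by
  rw [funext hb]
  refine Continuous.if_le (by fun_prop) (by fun_prop) continuous_const continuous_id ?_
  rintro x rfl
  simp [hH₁zero, hHm1zero]

theorem integral_eq_of_eq_piecewise_drift (hlam : lam ≠ 0) (hH₁c : Continuous H₁)
    (hHm1c : Continuous Hm1) (hH₁zero : H₁ 0 = 0) (hHm1zero : Hm1 0 = 0)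
    (hb : ∀ x, b x = if 0 ≤ x then c - lam * H₁ (x / lam) else c + lam * Hm1 (-x / lam))
    (x : ℝ) :
    ∫ t in (0 : ℝ)..x, b t = c * x -
      if 0 ≤ x then lam ^ 2 * ∫ u in (0 : ℝ)..(x / lam), H₁ u
      else lam ^ 2 * ∫ u in (0 : ℝ)..(-x / lam), Hm1 u := by
  split_ifs with hx
  · rw [← integral_const_sub_mul_comp_div hH₁c c hlam x]
    refine integral_congr fun t ht => ?_
    rw [uIcc_of_le hx] at ht
    simp [hb t, ht.1]
  · rw [← integral_const_add_mul_comp_neg_div hHm1c c hlam x]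
    refine integral_congr fun t ht => ?_
    rw [uIcc_of_ge (not_le.1 hx).le] at ht
    rcases ht.2.lt_or_eq with ht0 | rfl
    · simp [hb t, not_le.2 ht0]
    · simp [hb, hH₁zero, hHm1zero]

end Drift

theorem stmt_7_general (lam c σ₁ σm1 C₀ : ℝ) (hlam : 0 < lam)
    (hσ₁ : 0 < σ₁)
    (H₁ Hm1 : ℝ → ℝ) (hH₁c : Continuous H₁) (hHm1c : Continuous Hm1)
    (hH₁zero : H₁ 0 = 0) (hHm1zero : Hm1 0 = 0)
    (a : ℝ) (ha : a = lam ^ 3 * (σ₁ ^ 2 + σm1 ^ 2) / 2)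
    (b : ℝ → ℝ)
    (hb : ∀ x, b x = if 0 ≤ x then c - lam * H₁ (x / lam) else c + lam * Hm1 (-x / lam))
    (π : ℝ → ℝ)
    (hπ : ∀ x, π x = C₀ *
      Real.exp (-(1 / a) *
        (-c * x +
          if 0 ≤ x then lam ^ 2 * ∫ u in (0:ℝ)..(x / lam), H₁ u
          else lam ^ 2 * ∫ u in (0:ℝ)..(-x / lam), Hm1 u))) :
    ∀ f : ℝ → ℝ, ContDiff ℝ 2 f → HasCompactSupport f →
      ∫ x : ℝ, (a * deriv (deriv f) x + b x * deriv f x) * π x = 0 := by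
  intro f hf hfc
  have ha0 : a ≠ 0 := by rw [ha]; positivity
  have hbc := continuous_of_eq_piecewise_drift hH₁c hHm1c hH₁zero hHm1zero hb
  have hπ_exp : π = fun x => C₀ * Real.exp ((1 / a) * ∫ t in (0 : ℝ)..x, b t) := by
    funext x
    rw [hπ x, integral_eq_of_eq_piecewise_drift hlam.ne' hH₁c hHm1c hH₁zero hHm1zero hb x]
    ring_nf
  subst hπ_exp
  have hB : Continuous fun x => ∫ t in (0 : ℝ)..x, b t :=
    (differentiable_integral_of_continuous hbc).continuous
  exact integral_generator_mul_eq_zero (hasDerivAt_mul_exp_integral_div hbc ha0 C₀)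
    (by fun_prop) hf hfc

/-- The candidate stationary density `π` annihilates the generator
`A f = a f'' + b f'` of the limit diffusion: `∫ (a f'' + b f') π = 0` for `f ∈ C²_c(ℝ)`. -/
theorem stmt_7 (lam c σ₁ σm1 C₀ : ℝ) (hlam : 0 < lam) (hc : 0 < c)
    (hσ₁ : 0 < σ₁) (hσm1 : 0 < σm1) (hC₀ : 0 < C₀)
    (H₁ Hm1 : ℝ → ℝ) (hH₁c : Continuous H₁) (hHm1c : Continuous Hm1)
    (hH₁0 : ∀ u ≥ (0:ℝ), 0 ≤ H₁ u) (hHm10 : ∀ u ≥ (0:ℝ), 0 ≤ Hm1 u)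
    (hH₁zero : H₁ 0 = 0) (hHm1zero : Hm1 0 = 0)
    (a : ℝ) (ha : a = lam ^ 3 * (σ₁ ^ 2 + σm1 ^ 2) / 2)
    (b : ℝ → ℝ)
    (hb : ∀ x, b x = if 0 ≤ x then c - lam * H₁ (x / lam) else c + lam * Hm1 (-x / lam))
    (π : ℝ → ℝ)
    (hπ : ∀ x, π x = C₀ *
      Real.exp (-(1 / a) *
        (-c * x +
          if 0 ≤ x then lam ^ 2 * ∫ u in (0:ℝ)..(x / lam), H₁ u
          else lam ^ 2 * ∫ u in (0:ℝ)..(-x / lam), Hm1 u)))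
    (hnorm : ∫ x : ℝ, π x = 1) :
    ∀ f : ℝ → ℝ, ContDiff ℝ 2 f → HasCompactSupport f →
      ∫ x : ℝ, (a * deriv (deriv f) x + b x * deriv f x) * π x = 0 :=
  stmt_7_general lam c σ₁ σm1 C₀ hlam hσ₁ H₁ Hm1 hH₁c hHm1c hH₁zero hHm1zero a ha b hb π hπ
end

section
/- Let h: [0,∞) → [0,∞) be measurable and locally bounded, and for each n and k ≤ N let tₖ ∈ [0,∞), wₖ, dₖ ∈ [0,∞]. Then for t ≥ 0, ∫₀ᵗ Σ_{k=1}^{N(s)} h(s − tₖ)·1_{s − tₖ < wₖ ∧ dₖ} ds = Σ_{k=1}^{N(t)} ∫₀^{(t − tₖ)⁺ ∧ wₖ ∧ dₖ} h(u) du, where N(s) = #{k : tₖ ≤ s} for a nondecreasing sequence (tₖ). -/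
open Set intervalIntegral ENNReal

/-!
Each customer `k` contributes `h(s - tₖ)` while `0 ≤ s - tₖ < wₖ ∧ dₖ`. Since `N s ≤ N t`, the
sum up to `N s` is the sum up to `N t` of these contributions cut off at `s = tₖ`, a finite sum of
bounded measurable functions that commutes with the integral; for each `k` the substitution
`u = s - tₖ` turns the integral over `[0, t]` into the integral of `h` over
`[0, (t - tₖ) ∧ wₖ ∧ dₖ]`, up to the null set `{wₖ ∧ dₖ}`.
-/

open MeasureTheory

/-- `N` counts the terms of `x` with index `≥ 1`: `N s = #{k ≥ 1 | x k ≤ s}` when `x` is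
nondecreasing. -/
def IsCountingFunction (x : ℕ → ℝ) (N : ℝ → ℕ) : Prop :=
  ∀ s : ℝ, ∀ k, 1 ≤ k → (x k ≤ s ↔ k ≤ N s)

namespace IsCountingFunction

variable {x : ℕ → ℝ} {N : ℝ → ℕ}

theorem monotone (hN : IsCountingFunction x N) : Monotone N := by
  intro s t hst
  rcases Nat.eq_zero_or_pos (N s) with h0 | hpos
  · simp [h0]
  · exact (hN t _ hpos).1 (((hN s _ hpos).2 le_rfl).trans hst)

theorem le_of_mem_Icc (hN : IsCountingFunction x N) {s : ℝ} {k : ℕ}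
    (hk : k ∈ Finset.Icc 1 (N s)) : x k ≤ s :=
  (hN s k (Finset.mem_Icc.1 hk).1).2 (Finset.mem_Icc.1 hk).2

theorem filter_Icc (hN : IsCountingFunction x N) {s t : ℝ} (hst : s ≤ t) :
    (Finset.Icc 1 (N t)).filter (fun k => x k ≤ s) = Finset.Icc 1 (N s) := by
  ext k
  simp only [Finset.mem_filter, Finset.mem_Icc]
  constructor
  · rintro ⟨⟨hk1, -⟩, hks⟩
    exact ⟨hk1, (hN s k hk1).1 hks⟩
  · rintro ⟨hk1, hkn⟩
    exact ⟨⟨hk1, hkn.trans (hN.monotone hst)⟩, (hN s k hk1).2 hkn⟩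

theorem sum_Icc_eq_sum_indicator (hN : IsCountingFunction x N) {s t : ℝ} (hst : s ≤ t)
    (f : ℕ → ℝ → ℝ) :
    ∑ k ∈ Finset.Icc 1 (N s), f k s = ∑ k ∈ Finset.Icc 1 (N t), (Ici (x k)).indicator (f k) s := by
  simp only [indicator_apply, mem_Ici, ← Finset.sum_filter, hN.filter_Icc hst]

end IsCountingFunction

theorem intervalIntegrable_of_abs_le {f : ℝ → ℝ} {a b C : ℝ} (hab : a ≤ b) (hf : Measurable f)
    (hC : ∀ x ∈ Ioc a b, |f x| ≤ C) : IntervalIntegrable f volume a b := by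
  rw [intervalIntegrable_iff_integrableOn_Ioc_of_le hab]
  exact IntegrableOn.of_bound measure_Ioc_lt_top hf.aestronglyMeasurable C
    ((ae_restrict_iff' measurableSet_Ioc).2 (.of_forall hC))

theorem abs_indicator_Ici_comp_sub_le {f : ℝ → ℝ} {t C a s : ℝ}
    (hf : ∀ u ∈ Icc 0 t, |f u| ≤ C) (hC : 0 ≤ C) (ha : 0 ≤ a) (hs : s ≤ t) :
    |(Ici a).indicator (fun s => f (s - a)) s| ≤ C := by
  by_cases has : a ≤ s
  · rw [indicator_of_mem (mem_Ici.2 has)]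
    exact hf _ ⟨sub_nonneg.2 has, by linarith⟩
  · rwa [indicator_of_notMem (mem_Ici.not.2 has), abs_zero]

theorem integral_indicator_Ici_comp_sub (f : ℝ → ℝ) {a t : ℝ} (ha : 0 ≤ a) (hat : a ≤ t) :
    ∫ s in 0..t, (Ici a).indicator (fun s => f (s - a)) s = ∫ u in 0..t - a, f u := by
  rw [integral_of_le (ha.trans hat), setIntegral_indicator measurableSet_Ici,
    setIntegral_congr_set ((ae_eq_refl _).inter Ioi_ae_eq_Ici.symm), Ioc_inter_Ioi,
    max_eq_right ha, ← integral_of_le hat, integral_comp_sub_right, sub_self]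

theorem integral_indicator_ofReal_lt (f : ℝ → ℝ) {T : ℝ} (hT : 0 ≤ T) (m : ℝ≥0∞) :
    ∫ u in 0..T, {u | ENNReal.ofReal u < m}.indicator f u =
      ∫ u in 0..(ENNReal.ofReal T ⊓ m).toReal, f u := by
  rw [integral_of_le hT, integral_of_le toReal_nonneg,
    setIntegral_indicator (measurableSet_lt ENNReal.measurable_ofReal measurable_const)]
  rcases eq_or_ne m ⊤ with rfl | hm
  · simp [toReal_ofReal hT]
  have hcut : Ioc 0 T ∩ {u | ENNReal.ofReal u < m} = Ioc 0 T ∩ Iio m.toReal := by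
    ext u
    simp only [mem_inter_iff, mem_Ioc, mem_ofPred_eq, mem_Iio]
    constructor <;> rintro ⟨hu, hum⟩
    · exact ⟨hu, (ofReal_lt_iff_lt_toReal hu.1.le hm).1 hum⟩
    · exact ⟨hu, (ofReal_lt_iff_lt_toReal hu.1.le hm).2 hum⟩
  rw [hcut, setIntegral_congr_set ((ae_eq_refl _).inter Iio_ae_eq_Iic), Ioc_inter_Iic,
    toReal_min ofReal_ne_top hm, toReal_ofReal hT]

theorem stmt_19_general (h : ℝ → ℝ) (hmeas : Measurable h)
    (hlocbdd : ∀ b : ℝ, ∃ C, ∀ x ∈ Icc (0:ℝ) b, |h x| ≤ C)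
    (tk : ℕ → ℝ) (htk0 : ∀ k, 0 ≤ tk k)
    (w d : ℕ → ℝ≥0∞) (N : ℝ → ℕ)
    (hN : ∀ s : ℝ, ∀ k, 1 ≤ k → (tk k ≤ s ↔ k ≤ N s)) :
    ∀ t ≥ (0:ℝ),
      (∫ s in (0:ℝ)..t,
          ∑ k ∈ Finset.Icc 1 (N s),
            if ENNReal.ofReal (s - tk k) < w k ⊓ d k then h (s - tk k) else 0) =
        ∑ k ∈ Finset.Icc 1 (N t),
          ∫ u in (0:ℝ)..(ENNReal.ofReal (max (t - tk k) 0) ⊓ w k ⊓ d k).toReal, h u := by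
  intro t ht
  have hcount : IsCountingFunction tk N := hN
  obtain ⟨C, hC⟩ := hlocbdd t
  have hC0 : 0 ≤ C := (abs_nonneg _).trans (hC 0 ⟨le_rfl, ht⟩)
  set F : ℕ → ℝ → ℝ := fun k => {u | ENNReal.ofReal u < w k ⊓ d k}.indicator h
  have hF_meas (k : ℕ) : Measurable (F k) :=
    hmeas.indicator (measurableSet_lt ENNReal.measurable_ofReal measurable_const)
  have hF_bound (k : ℕ) (u : ℝ) (hu : u ∈ Icc 0 t) : |F k u| ≤ C :=
    (norm_indicator_le_norm_self h u).trans (hC u hu)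
  calc _ = ∫ s in 0..t, ∑ k ∈ Finset.Icc 1 (N t),
          (Ici (tk k)).indicator (fun s => F k (s - tk k)) s := by
        refine integral_congr fun s hs => ?_
        rw [← hcount.sum_Icc_eq_sum_indicator (uIcc_of_le ht ▸ hs).2 fun k s => F k (s - tk k)]
        simp only [F, indicator_apply, mem_ofPred_eq]
    _ = ∑ k ∈ Finset.Icc 1 (N t),
          ∫ s in 0..t, (Ici (tk k)).indicator (fun s => F k (s - tk k)) s :=
        integral_finsetSum fun k _ => intervalIntegrable_of_abs_le ht
          (((hF_meas k).comp (measurable_sub_const _)).indicator measurableSet_Ici)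
          fun s hs => abs_indicator_Ici_comp_sub_le (hF_bound k) hC0 (htk0 k) hs.2
    _ = _ := by
        refine Finset.sum_congr rfl fun k hk => ?_
        have htk : tk k ≤ t := hcount.le_of_mem_Icc hk
        rw [integral_indicator_Ici_comp_sub _ (htk0 k) htk,
          integral_indicator_ofReal_lt _ (sub_nonneg.2 htk), max_eq_left (sub_nonneg.2 htk),
          inf_assoc]

/-- Fubini/change-of-variables identity for the compensator of the abandonment process:
`∫₀ᵗ ∑_{k=1}^{N(s)} h(s − tₖ) 1_{s − tₖ < wₖ ∧ dₖ} ds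
  = ∑_{k=1}^{N(t)} ∫₀^{(t−tₖ)⁺ ∧ wₖ ∧ dₖ} h(u) du`,
where `N(s) = #{k ≥ 1 : tₖ ≤ s}` for a nondecreasing sequence `(tₖ) ⊆ [0,∞)` and
`wₖ, dₖ ∈ [0,∞]`. -/
theorem stmt_19 (h : ℝ → ℝ) (hmeas : Measurable h) (hnn : ∀ u, 0 ≤ h u)
    (hlocbdd : ∀ b : ℝ, ∃ C, ∀ x ∈ Icc (0:ℝ) b, |h x| ≤ C)
    (tk : ℕ → ℝ) (htk0 : ∀ k, 0 ≤ tk k) (htkmono : Monotone tk)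
    (w d : ℕ → ℝ≥0∞) (N : ℝ → ℕ)
    (hN : ∀ s : ℝ, ∀ k, 1 ≤ k → (tk k ≤ s ↔ k ≤ N s)) :
    ∀ t ≥ (0:ℝ),
      (∫ s in (0:ℝ)..t,
          ∑ k ∈ Finset.Icc 1 (N s),
            if ENNReal.ofReal (s - tk k) < w k ⊓ d k then h (s - tk k) else 0) =
        ∑ k ∈ Finset.Icc 1 (N t),
          ∫ u in (0:ℝ)..(ENNReal.ofReal (max (t - tk k) 0) ⊓ w k ⊓ d k).toReal, h u :=
  stmt_19_general h hmeas hlocbdd tk htk0 w d N hN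
end
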